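/- arXiv:1810.11894 — 2 statements merged into one kernel-verified Lean document; each statement's English description precedes it below -/
import Mathlib

section
/- Corollary (quadratic bound via a divergence-free generalized flow). Suppose 𝒦_{ij} : ℝ → ℝ ((i,j) ∈ V × V) are continuous τ-periodic functions that are identically zero when (i,j) ∉ E, satisfying the divergence-free condition Σ_{j∈V} 𝒦_{ij}(t) − Σ_{j∈V} 𝒦_{ji}(t) = 0 for all i and t, and such that K := (1/τ)∫₀^τ Σ_{(i,j)∈V×V} α_{ij}(t)𝒦_{ij}(t) dt ≠ 0. Define σ̂ := 2 Σ_{(i,j)∈E} (1/τ)∫₀^τ 𝒦_{ij}(t)²/𝒬_{ij}(t) dt. Then limsup_{y→y_{α,γ}, y≠y_{α,γ}} I_{α,γ}(y)/(y − y_{α,γ})² ≤ σ̂/(4 K²), where the limsup is taken in [0,∞]. -/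
/-!
Perturb the stationary flow along the divergence-free `𝒦`: for small `ε` the pair
`(𝒬 + ε𝒦, π)` is admissible at the level `y = y_{α,γ} + ε K`, because `𝒦` does not change
the continuity equation. On each edge `Φ(p + x, p) ≤ x² / (2 (1 - c) p)` whenever `|x| ≤ c p`,
so `I(y) ≤ ε² σ̂ / (4 (1 - c)) = (y - y_{α,γ})² σ̂ / (4 K² (1 - c))`. As `y → y_{α,γ}` the
perturbation `ε𝒦` becomes uniformly small relative to `𝒬` (both are continuous and periodic),
so `c` can be taken arbitrarily small.
-/

open MeasureTheory Filter
open scoped Topology ENNReal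

/-- The function `Φ(q,p) = q log(q/p) − q + p` on `[0,∞) × [0,∞)` with values in `[0,∞]`,
with the conventions `Φ(0,p) = p` and `Φ(q,0) = ∞` for `q > 0`. -/
noncomputable def Phi (q p : ℝ) : ℝ≥0∞ :=
  if q = 0 then ENNReal.ofReal p
  else if p = 0 then ⊤
  else ENNReal.ofReal (q * Real.log (q / p) - q + p)

open Set

lemma nonneg_of_hasDerivAt_of_mul_nonneg {φ φ' : ℝ → ℝ} {u : ℝ}
    (hφ : ∀ v ∈ uIcc 0 u, HasDerivAt φ (φ' v) v) (hsign : ∀ v ∈ uIcc 0 u, 0 ≤ v * φ' v)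
    (h0 : φ 0 = 0) : 0 ≤ φ u := by
  have hcont : ContinuousOn φ (uIcc 0 u) := fun v hv => (hφ v hv).continuousAt.continuousWithinAt
  rcases lt_trichotomy u 0 with hu | rfl | hu
  · rw [uIcc_of_ge hu.le] at hφ hsign hcont
    obtain ⟨ξ, hξ, hslope⟩ := exists_hasDerivAt_eq_slope φ φ' hu hcont
      fun v hv => hφ v (Ioo_subset_Icc_self hv)
    have hφu : φ u = u * φ' ξ := by
      rw [hslope, h0]; field_simp; ring
    nlinarith [hsign ξ (Ioo_subset_Icc_self hξ), hξ.2]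
  · exact h0.ge
  · rw [uIcc_of_le hu.le] at hφ hsign hcont
    obtain ⟨ξ, hξ, hslope⟩ := exists_hasDerivAt_eq_slope φ φ' hu hcont
      fun v hv => hφ v (Ioo_subset_Icc_self hv)
    have hφu : φ u = u * φ' ξ := by
      rw [hslope, h0]; field_simp; ring
    nlinarith [hsign ξ (Ioo_subset_Icc_self hξ), hξ.1]

lemma mul_log_one_add_le_sq_div {c v : ℝ} (hc : c < 1) (hv : |v| ≤ c) :
    v * Real.log (1 + v) ≤ v ^ 2 / (1 - c) := by
  obtain ⟨hcv, hvc⟩ := abs_le.1 hv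
  have h1v : 0 < 1 + v := by linarith
  have hsq : v ^ 2 ≤ v ^ 2 / (1 - c) := by
    rw [le_div_iff₀ (by linarith)]; nlinarith [sq_nonneg v]
  rcases le_total 0 v with h0v | hv0
  · have := Real.log_le_sub_one_of_pos h1v
    nlinarith
  · have hlog := Real.one_sub_inv_le_log_of_pos h1v
    have : v * Real.log (1 + v) ≤ v ^ 2 / (1 + v) := by
      have e : 1 - (1 + v)⁻¹ = v / (1 + v) := by field_simp; ring
      rw [e] at hlog
      have := mul_le_mul_of_nonpos_left hlog hv0
      rwa [← mul_div_assoc, ← sq] at this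
    exact this.trans (div_le_div_of_nonneg_left (sq_nonneg v) (by linarith) (by linarith))

lemma one_add_mul_log_one_add_sub_le {c u : ℝ} (hc : c < 1) (hu : |u| ≤ c) :
    (1 + u) * Real.log (1 + u) - u ≤ u ^ 2 / (2 * (1 - c)) := by
  have hsmall : ∀ v ∈ uIcc 0 u, |v| ≤ c := fun v hv => by
    simpa using (abs_sub_left_of_mem_uIcc hv).trans (by simpa using hu)
  have hderiv : ∀ v ∈ uIcc 0 u, HasDerivAt
      (fun v => v ^ 2 / (2 * (1 - c)) - ((1 + v) * Real.log (1 + v) - v))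
      (v / (1 - c) - Real.log (1 + v)) v := by
    intro v hv
    have h1v : 1 + v ≠ 0 := by linarith [(abs_le.1 (hsmall v hv)).1]
    refine (((hasDerivAt_pow 2 v).div_const (2 * (1 - c))).sub
      ((((hasDerivAt_id v).const_add 1).mul
        (((hasDerivAt_id v).const_add 1).log h1v)).sub (hasDerivAt_id v))).congr_deriv ?_
    have hc' : 1 - c ≠ 0 := by linarith
    simp only [id]
    field_simp
    ring
  have := nonneg_of_hasDerivAt_of_mul_nonneg hderiv (fun v hv => by
      have := mul_log_one_add_le_sq_div hc (hsmall v hv)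
      rw [mul_sub, mul_div_assoc', ← sq]; linarith) (by simp)
  linarith

lemma Phi_add_le {p x c : ℝ} (hp : 0 < p) (hc : c < 1) (hx : |x| ≤ c * p) :
    Phi (p + x) p ≤ ENNReal.ofReal (x ^ 2 / p / (2 * (1 - c))) := by
  have hu : |x / p| ≤ c := by rwa [abs_div, abs_of_pos hp, div_le_iff₀ hp]
  have hpx : 0 < p + x := by linarith [(abs_le.1 hx).1, mul_lt_mul_of_pos_right hc hp]
  rw [Phi, if_neg hpx.ne', if_neg hp.ne']
  refine ENNReal.ofReal_le_ofReal ?_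
  have key := mul_le_mul_of_nonneg_left (one_add_mul_log_one_add_sub_le hc hu) hp.le
  have e : (p + x) / p = 1 + x / p := by field_simp
  have hc' : 1 - c ≠ 0 := by linarith
  calc (p + x) * Real.log ((p + x) / p) - (p + x) + p
      = p * ((1 + x / p) * Real.log (1 + x / p) - x / p) := by rw [e]; field_simp; ring
    _ ≤ p * ((x / p) ^ 2 / (2 * (1 - c))) := key
    _ = x ^ 2 / p / (2 * (1 - c)) := by field_simp

lemma lintegral_Phi_add_le {p x : ℝ → ℝ} {a b c : ℝ} (hab : a ≤ b) (hc : c < 1)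
    (hp : Continuous p) (hx : Continuous x) (hp0 : ∀ t, 0 < p t) (hxp : ∀ t, |x t| ≤ c * p t) :
    ∫⁻ t in Ioc a b, Phi (p t + x t) (p t)
      ≤ ENNReal.ofReal ((∫ t in a..b, x t ^ 2 / p t) / (2 * (1 - c))) := by
  have hcont : Continuous fun t => x t ^ 2 / p t / (2 * (1 - c)) :=
    ((hx.pow 2).div hp fun t => (hp0 t).ne').div_const _
  have hnonneg : ∀ t, 0 ≤ x t ^ 2 / p t / (2 * (1 - c)) := fun t =>
    div_nonneg (div_nonneg (sq_nonneg _) (hp0 t).le) (by linarith)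
  calc ∫⁻ t in Ioc a b, Phi (p t + x t) (p t)
      ≤ ∫⁻ t in Ioc a b, ENNReal.ofReal (x t ^ 2 / p t / (2 * (1 - c))) :=
        lintegral_mono fun t => Phi_add_le (hp0 t) hc (hxp t)
    _ = ENNReal.ofReal (∫ t in Ioc a b, x t ^ 2 / p t / (2 * (1 - c))) :=
        (ofReal_integral_eq_lintegral_ofReal hcont.integrableOn_Ioc
          (.of_forall hnonneg)).symm
    _ = ENNReal.ofReal ((∫ t in a..b, x t ^ 2 / p t) / (2 * (1 - c))) := by
        rw [integral_div, intervalIntegral.integral_of_le hab]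

lemma sum_lintegral_Phi_add_mul_le {ι : Type*} (s : Finset ι) {p K : ι → ℝ → ℝ} {τ c ε : ℝ}
    (hτ : 0 < τ) (hc : c < 1) (hp : ∀ e ∈ s, Continuous (p e)) (hK : ∀ e ∈ s, Continuous (K e))
    (hp0 : ∀ e ∈ s, ∀ t, 0 < p e t) (hε : ∀ e ∈ s, ∀ t, |ε * K e t| ≤ c * p e t) :
    ∑ e ∈ s, ENNReal.ofReal (1 / τ) * ∫⁻ t in Ioc 0 τ, Phi (p e t + ε * K e t) (p e t)
      ≤ ENNReal.ofReal
          (ε ^ 2 / (2 * (1 - c)) * ∑ e ∈ s, (1 / τ) * ∫ t in (0:ℝ)..τ, K e t ^ 2 / p e t) := by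
  have hint_nonneg : ∀ e ∈ s, 0 ≤ ∫ t in (0:ℝ)..τ, K e t ^ 2 / p e t := fun e he =>
    intervalIntegral.integral_nonneg hτ.le fun t _ => div_nonneg (sq_nonneg _) (hp0 e he t).le
  have hcoef : 0 ≤ ε ^ 2 / (2 * (1 - c)) := div_nonneg (sq_nonneg _) (by linarith)
  rw [Finset.mul_sum, ENNReal.ofReal_sum_of_nonneg fun e he =>
    mul_nonneg hcoef (mul_nonneg (by positivity) (hint_nonneg e he))]
  refine Finset.sum_le_sum fun e he => ?_
  rw [mul_left_comm, ENNReal.ofReal_mul (by positivity)]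
  refine mul_le_mul_right ((lintegral_Phi_add_le (x := fun t => ε * K e t) hτ.le hc (hp e he)
    (continuous_const.mul (hK e he)) (hp0 e he) (hε e he)).trans_eq ?_) _
  simp only [mul_pow, mul_div_assoc, intervalIntegral.integral_const_mul]
  congr 1
  ring

lemma Function.Periodic.eventually_abs_mul_le {f g : ℝ → ℝ} {c κ : ℝ} (hf : Periodic f c)
    (hg : Periodic g c) (hc : c ≠ 0) (hfc : Continuous f) (hgc : Continuous g)
    (hg0 : ∀ t, 0 < g t) (hκ : 0 < κ) : ∀ᶠ ε in 𝓝 (0:ℝ), ∀ t, |ε * f t| ≤ κ * g t := by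
  obtain ⟨B, hB⟩ := isBounded_iff_forall_norm_le.1
    ((hf.div hg).isBounded_of_continuous hc (hfc.div hgc fun t => (hg0 t).ne'))
  have hfB : ∀ t, |f t| ≤ |B| * g t := fun t => by
    have := (hB _ ⟨t, rfl⟩).trans (le_abs_self B)
    rwa [Real.norm_eq_abs, Pi.div_apply, abs_div, abs_of_pos (hg0 t), div_le_iff₀ (hg0 t)] at this
  filter_upwards [Metric.ball_mem_nhds 0 (by positivity : 0 < κ / (|B| + 1))] with ε hε t
  rw [Metric.mem_ball, Real.dist_eq, sub_zero] at hε
  calc |ε * f t| = |ε| * |f t| := abs_mul _ _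
    _ ≤ κ / (|B| + 1) * (|B| * g t) :=
        mul_le_mul hε.le (hfB t) (abs_nonneg _) (by positivity)
    _ ≤ κ * g t := by
        rw [div_mul_eq_mul_div, div_le_iff₀ (by positivity)]
        nlinarith [hg0 t, abs_nonneg B]

noncomputable def rateFunction {V : Type} [Fintype V] (E : Finset (V × V)) (τ : ℝ)
    (w α : V → V → ℝ → ℝ) (γ : V → ℝ → ℝ) (y : ℝ) : ℝ≥0∞ :=
  sInf { c : ℝ≥0∞ |
      ∃ (Q : V → V → ℝ → ℝ) (ρ : V → ℝ → ℝ),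
        (∀ i j, Continuous (Q i j)) ∧
        (∀ i j, Function.Periodic (Q i j) τ) ∧
        (∀ i j t, 0 ≤ Q i j t) ∧
        (∀ i j, (i, j) ∉ E → ∀ t, Q i j t = 0) ∧
        (∀ i, ContDiff ℝ 1 (ρ i)) ∧
        (∀ i, Function.Periodic (ρ i) τ) ∧
        (∀ i t, 0 ≤ ρ i t) ∧
        (∀ t : ℝ, ∑ i, ρ i t = 1) ∧
        (∀ i t, deriv (ρ i) t + (∑ j, Q i j t) - (∑ j, Q j i t) = 0) ∧
        ((1 / τ) * (∫ t in (0:ℝ)..τ,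
          ((∑ i, ∑ j, α i j t * Q i j t) + ∑ i, γ i t * ρ i t)) = y) ∧
        c = ∑ e ∈ E, ENNReal.ofReal (1 / τ) *
          (∫⁻ t in Set.Ioc (0:ℝ) τ, Phi (Q e.1 e.2 t) (ρ e.1 t * w e.1 e.2 t)) }

lemma rateFunction_le_of_perturbation {V : Type} [Fintype V] {E : Finset (V × V)} {τ : ℝ}
    (hτ : 0 < τ) {w : V → V → ℝ → ℝ} (hw_cont : ∀ i j, Continuous (w i j))
    (hw_per : ∀ i j, Function.Periodic (w i j) τ) (hw_pos : ∀ i j, (i, j) ∈ E → ∀ t, 0 < w i j t)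
    (hw_zero : ∀ i j, (i, j) ∉ E → ∀ t, w i j t = 0)
    {pi : V → ℝ → ℝ} (hpi_diff : ∀ i, ContDiff ℝ 1 (pi i))
    (hpi_per : ∀ i, Function.Periodic (pi i) τ) (hpi_pos : ∀ i t, 0 < pi i t)
    (hpi_sum : ∀ t : ℝ, ∑ i, pi i t = 1)
    (hpi_cont_eq : ∀ i t, deriv (pi i) t
      + (∑ j, pi i t * w i j t) - (∑ j, pi j t * w j i t) = 0)
    {α : V → V → ℝ → ℝ} (hα_cont : ∀ i j, Continuous (α i j))
    {γ : V → ℝ → ℝ} (hγ_cont : ∀ i, Continuous (γ i))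
    {K : V → V → ℝ → ℝ} (hK_cont : ∀ i j, Continuous (K i j))
    (hK_per : ∀ i j, Function.Periodic (K i j) τ) (hK_zero : ∀ i j, (i, j) ∉ E → ∀ t, K i j t = 0)
    (hK_div : ∀ i (t : ℝ), (∑ j, K i j t) - (∑ j, K j i t) = 0)
    {ε κ : ℝ} (hκ : κ < 1)
    (hε : ∀ e ∈ E, ∀ t, |ε * K e.1 e.2 t| ≤ κ * (pi e.1 t * w e.1 e.2 t)) :
    rateFunction E τ w α γ
        ((1 / τ) * (∫ t in (0:ℝ)..τ,
          ((∑ i, ∑ j, α i j t * (pi i t * w i j t)) + ∑ i, γ i t * pi i t))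
        + ε * ((1 / τ) * (∫ t in (0:ℝ)..τ, ∑ i, ∑ j, α i j t * K i j t)))
      ≤ ENNReal.ofReal (ε ^ 2 / (2 * (1 - κ)) * ∑ e ∈ E, (1 / τ) *
          ∫ t in (0:ℝ)..τ, K e.1 e.2 t ^ 2 / (pi e.1 t * w e.1 e.2 t)) := by
  have hpi_cont : ∀ i, Continuous (pi i) := fun i => (hpi_diff i).continuous
  have hq_pos : ∀ e ∈ E, ∀ t, 0 < pi e.1 t * w e.1 e.2 t := fun e he t =>
    mul_pos (hpi_pos _ _) (hw_pos _ _ he t)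
  refine sInf_le_of_le ⟨fun i j t => pi i t * w i j t + ε * K i j t, pi,
    fun i j => ((hpi_cont i).mul (hw_cont i j)).add (continuous_const.mul (hK_cont i j)),
    fun i j t => by simp only [hpi_per i t, hw_per i j t, hK_per i j t], ?_, ?_,
    hpi_diff, hpi_per, fun i t => (hpi_pos i t).le, hpi_sum, ?_, ?_, rfl⟩
    (sum_lintegral_Phi_add_mul_le E (p := fun e t => pi e.1 t * w e.1 e.2 t)
      (K := fun e => K e.1 e.2) hτ hκ (fun e _ => (hpi_cont _).mul (hw_cont _ _))
      (fun e _ => hK_cont _ _) hq_pos hε)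
  · intro i j t
    by_cases hij : (i, j) ∈ E
    · have := (abs_le.1 (hε _ hij t)).1
      nlinarith [hq_pos _ hij t]
    · simp [hw_zero i j hij t, hK_zero i j hij t]
  · intro i j hij t
    simp [hw_zero i j hij t, hK_zero i j hij t]
  · intro i t
    have hεK_div : ∑ j, ε * K i j t - ∑ j, ε * K j i t = 0 := by
      rw [← Finset.mul_sum, ← Finset.mul_sum, ← mul_sub, hK_div, mul_zero]
    simp only [Finset.sum_add_distrib]
    linear_combination hpi_cont_eq i t + hεK_div
  · have hsplit : ∀ t, (∑ i, ∑ j, α i j t * (pi i t * w i j t + ε * K i j t))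
        + ∑ i, γ i t * pi i t = ((∑ i, ∑ j, α i j t * (pi i t * w i j t))
        + ∑ i, γ i t * pi i t) + ε * ∑ i, ∑ j, α i j t * K i j t := fun t => by
      simp only [mul_add, Finset.sum_add_distrib, Finset.mul_sum, mul_left_comm (α _ _ _) ε]
      ring
    have hcont₁ : Continuous fun t =>
        (∑ i, ∑ j, α i j t * (pi i t * w i j t)) + ∑ i, γ i t * pi i t := by fun_prop
    have hcont₂ : Continuous fun t => ε * ∑ i, ∑ j, α i j t * K i j t := by fun_prop
    rw [intervalIntegral.integral_congr fun t _ => hsplit t, intervalIntegral.integral_add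
      (hcont₁.intervalIntegrable _ _) (hcont₂.intervalIntegrable _ _),
      intervalIntegral.integral_const_mul]
    ring

lemma ENNReal.le_ofReal_of_forall_le_ofReal_div_one_sub {x : ℝ≥0∞} {A : ℝ}
    (h : ∀ κ ∈ Ioo (0:ℝ) 1, x ≤ ENNReal.ofReal (A / (1 - κ))) : x ≤ ENNReal.ofReal A := by
  have hcont : ContinuousAt (fun κ : ℝ => A / (1 - κ)) 0 := by fun_prop (disch := norm_num)
  refine ge_of_tendsto (x := 𝓝[>] (0:ℝ)) ?_ (by filter_upwards [Ioo_mem_nhdsGT one_pos] using h)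
  simpa using (ENNReal.tendsto_ofReal hcont.tendsto).mono_left nhdsWithin_le_nhds

theorem stmt1_general
    {V : Type} [Fintype V]
    (E : Finset (V × V))
    (τ : ℝ) (hτ : 0 < τ)
    (w : V → V → ℝ → ℝ)
    (hw_cont : ∀ i j, Continuous (w i j))
    (hw_per : ∀ i j, Function.Periodic (w i j) τ)
    (hw_pos : ∀ i j, (i, j) ∈ E → ∀ t, 0 < w i j t)
    (hw_zero : ∀ i j, (i, j) ∉ E → ∀ t, w i j t = 0)
    (pi : V → ℝ → ℝ)
    (hpi_diff : ∀ i, ContDiff ℝ 1 (pi i))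
    (hpi_per : ∀ i, Function.Periodic (pi i) τ)
    (hpi_pos : ∀ i t, 0 < pi i t)
    (hpi_sum : ∀ t : ℝ, ∑ i, pi i t = 1)
    (hpi_cont_eq : ∀ i t, deriv (pi i) t
      + (∑ j, pi i t * w i j t) - (∑ j, pi j t * w j i t) = 0)
    (α : V → V → ℝ → ℝ)
    (hα_cont : ∀ i j, Continuous (α i j))
    (γ : V → ℝ → ℝ)
    (hγ_cont : ∀ i, Continuous (γ i))
    (y0 : ℝ)
    (hy0 : y0 = (1 / τ) * (∫ t in (0:ℝ)..τ,
      ((∑ i, ∑ j, α i j t * (pi i t * w i j t)) + ∑ i, γ i t * pi i t)))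
    (Iag : ℝ → ℝ≥0∞)
    (hI : ∀ y : ℝ, Iag y = sInf { c : ℝ≥0∞ |
      ∃ (Q : V → V → ℝ → ℝ) (ρ : V → ℝ → ℝ),
        (∀ i j, Continuous (Q i j)) ∧
        (∀ i j, Function.Periodic (Q i j) τ) ∧
        (∀ i j t, 0 ≤ Q i j t) ∧
        (∀ i j, (i, j) ∉ E → ∀ t, Q i j t = 0) ∧
        (∀ i, ContDiff ℝ 1 (ρ i)) ∧
        (∀ i, Function.Periodic (ρ i) τ) ∧
        (∀ i t, 0 ≤ ρ i t) ∧
        (∀ t : ℝ, ∑ i, ρ i t = 1) ∧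
        (∀ i t, deriv (ρ i) t + (∑ j, Q i j t) - (∑ j, Q j i t) = 0) ∧
        ((1 / τ) * (∫ t in (0:ℝ)..τ,
          ((∑ i, ∑ j, α i j t * Q i j t) + ∑ i, γ i t * ρ i t)) = y) ∧
        c = ∑ e ∈ E, ENNReal.ofReal (1 / τ) *
          (∫⁻ t in Set.Ioc (0:ℝ) τ, Phi (Q e.1 e.2 t) (ρ e.1 t * w e.1 e.2 t)) })
    -- the divergence-free generalized flow 𝒦
    (K : V → V → ℝ → ℝ)
    (hK_cont : ∀ i j, Continuous (K i j))
    (hK_per : ∀ i j, Function.Periodic (K i j) τ)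
    (hK_zero : ∀ i j, (i, j) ∉ E → ∀ t, K i j t = 0)
    (hK_div : ∀ i (t : ℝ), (∑ j, K i j t) - (∑ j, K j i t) = 0)
    (Kav : ℝ)
    (hKav : Kav = (1 / τ) * (∫ t in (0:ℝ)..τ, ∑ i, ∑ j, α i j t * K i j t))
    (hKav_ne : Kav ≠ 0)
    (σhat : ℝ)
    (hσhat : σhat = 2 * ∑ e ∈ E, (1 / τ) * (∫ t in (0:ℝ)..τ,
      (K e.1 e.2 t) ^ 2 / (pi e.1 t * w e.1 e.2 t))) :
    Filter.limsup (fun y : ℝ => Iag y / ENNReal.ofReal ((y - y0) ^ 2)) (𝓝[≠] y0)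
      ≤ ENNReal.ofReal (σhat / (4 * Kav ^ 2)) := by
  have hsmall : ∀ κ > 0, ∀ᶠ y in 𝓝 y0, ∀ e ∈ E, ∀ t,
      |(y - y0) / Kav * K e.1 e.2 t| ≤ κ * (pi e.1 t * w e.1 e.2 t) := fun κ hκ =>
    (((continuous_id.sub continuous_const).div_const Kav).tendsto' y0 0 (by simp)).eventually
      ((Filter.eventually_all_finset E).2 fun e he => (hK_per e.1 e.2).eventually_abs_mul_le
        ((hpi_per e.1).mul (hw_per e.1 e.2)) hτ.ne' (hK_cont _ _)
        ((hpi_diff e.1).continuous.mul (hw_cont _ _))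
        (fun t => mul_pos (hpi_pos _ t) (hw_pos _ _ he t)) hκ)
  have hσ : ∑ e ∈ E, (1 / τ) * (∫ t in (0:ℝ)..τ,
      (K e.1 e.2 t) ^ 2 / (pi e.1 t * w e.1 e.2 t)) = σhat / 2 := by
    rw [hσhat]; ring
  refine ENNReal.le_ofReal_of_forall_le_ofReal_div_one_sub fun κ ⟨hκ0, hκ1⟩ => ?_
  refine limsup_le_of_le (by isBoundedDefault) (eventually_nhdsWithin_of_eventually_nhds ?_)
  filter_upwards [hsmall κ hκ0] with y hy
  have hle := rateFunction_le_of_perturbation hτ hw_cont hw_per hw_pos hw_zero hpi_diff hpi_per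
    hpi_pos hpi_sum hpi_cont_eq hα_cont hγ_cont hK_cont hK_per hK_zero hK_div hκ1 hy
  have hy_eq : y0 + (y - y0) / Kav * Kav = y := by field_simp; ring
  rw [← hy0, ← hKav, hσ, hy_eq] at hle
  refine ENNReal.div_le_of_le_mul ((hI y).trans_le (hle.trans_eq ?_))
  rw [← ENNReal.ofReal_mul' (sq_nonneg _)]
  congr 1
  have h1κ : 1 - κ ≠ 0 := by linarith
  field_simp
  ring

theorem stmt1
    {V : Type} [Fintype V] [Nonempty V]
    (E : Finset (V × V)) (hE : ∀ i : V, (i, i) ∉ E)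
    (τ : ℝ) (hτ : 0 < τ)
    (w : V → V → ℝ → ℝ)
    (hw_cont : ∀ i j, Continuous (w i j))
    (hw_per : ∀ i j, Function.Periodic (w i j) τ)
    (hw_pos : ∀ i j, (i, j) ∈ E → ∀ t, 0 < w i j t)
    (hw_zero : ∀ i j, (i, j) ∉ E → ∀ t, w i j t = 0)
    (pi : V → ℝ → ℝ)
    (hpi_diff : ∀ i, ContDiff ℝ 1 (pi i))
    (hpi_per : ∀ i, Function.Periodic (pi i) τ)
    (hpi_pos : ∀ i t, 0 < pi i t)
    (hpi_sum : ∀ t : ℝ, ∑ i, pi i t = 1)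
    (hpi_cont_eq : ∀ i t, deriv (pi i) t
      + (∑ j, pi i t * w i j t) - (∑ j, pi j t * w j i t) = 0)
    (α : V → V → ℝ → ℝ)
    (hα_cont : ∀ i j, Continuous (α i j))
    (hα_per : ∀ i j, Function.Periodic (α i j) τ)
    (γ : V → ℝ → ℝ)
    (hγ_cont : ∀ i, Continuous (γ i))
    (hγ_per : ∀ i, Function.Periodic (γ i) τ)
    (y0 : ℝ)
    (hy0 : y0 = (1 / τ) * (∫ t in (0:ℝ)..τ,
      ((∑ i, ∑ j, α i j t * (pi i t * w i j t)) + ∑ i, γ i t * pi i t)))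
    (hy0_ne : y0 ≠ 0)
    (Iag : ℝ → ℝ≥0∞)
    (hI : ∀ y : ℝ, Iag y = sInf { c : ℝ≥0∞ |
      ∃ (Q : V → V → ℝ → ℝ) (ρ : V → ℝ → ℝ),
        (∀ i j, Continuous (Q i j)) ∧
        (∀ i j, Function.Periodic (Q i j) τ) ∧
        (∀ i j t, 0 ≤ Q i j t) ∧
        (∀ i j, (i, j) ∉ E → ∀ t, Q i j t = 0) ∧
        (∀ i, ContDiff ℝ 1 (ρ i)) ∧
        (∀ i, Function.Periodic (ρ i) τ) ∧
        (∀ i t, 0 ≤ ρ i t) ∧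
        (∀ t : ℝ, ∑ i, ρ i t = 1) ∧
        (∀ i t, deriv (ρ i) t + (∑ j, Q i j t) - (∑ j, Q j i t) = 0) ∧
        ((1 / τ) * (∫ t in (0:ℝ)..τ,
          ((∑ i, ∑ j, α i j t * Q i j t) + ∑ i, γ i t * ρ i t)) = y) ∧
        c = ∑ e ∈ E, ENNReal.ofReal (1 / τ) *
          (∫⁻ t in Set.Ioc (0:ℝ) τ, Phi (Q e.1 e.2 t) (ρ e.1 t * w e.1 e.2 t)) })
    -- the divergence-free generalized flow 𝒦
    (K : V → V → ℝ → ℝ)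
    (hK_cont : ∀ i j, Continuous (K i j))
    (hK_per : ∀ i j, Function.Periodic (K i j) τ)
    (hK_zero : ∀ i j, (i, j) ∉ E → ∀ t, K i j t = 0)
    (hK_div : ∀ i (t : ℝ), (∑ j, K i j t) - (∑ j, K j i t) = 0)
    (Kav : ℝ)
    (hKav : Kav = (1 / τ) * (∫ t in (0:ℝ)..τ, ∑ i, ∑ j, α i j t * K i j t))
    (hKav_ne : Kav ≠ 0)
    (σhat : ℝ)
    (hσhat : σhat = 2 * ∑ e ∈ E, (1 / τ) * (∫ t in (0:ℝ)..τ,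
      (K e.1 e.2 t) ^ 2 / (pi e.1 t * w e.1 e.2 t))) :
    Filter.limsup (fun y : ℝ => Iag y / ENNReal.ofReal ((y - y0) ^ 2)) (𝓝[≠] y0)
      ≤ ENNReal.ofReal (σhat / (4 * Kav ^ 2)) :=
  stmt1_general E τ hτ w hw_cont hw_per hw_pos hw_zero pi hpi_diff hpi_per hpi_pos hpi_sum
    hpi_cont_eq α hα_cont γ hγ_cont y0 hy0 Iag hI K hK_cont hK_per hK_zero hK_div Kav hKav hKav_ne
    σhat hσhat
end

section
/- Corollary (quadratic bound with the constant C(p), generic increments). Let p = (p_i)_{i∈V} be a time-independent probability vector (p_i ≥ 0, Σ_{i∈V} p_i = 1) such that Σ_{i∈V} p_i · (1/τ)∫₀^τ γ_i(t) dt = 0. Define C(p) := 2 Σ_{(i,j)∈E} p_i² · (1/τ)∫₀^τ w_{ij}(t)/π_i(t) dt. Then limsup_{y→y_{α,γ}, y≠y_{α,γ}} I_{α,γ}(y)/(y − y_{α,γ})² ≤ C(p)/(4 y_{α,γ}²), where the limsup is taken in [0,∞]. -/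
open MeasureTheory Filter
open scoped Topology ENNReal

/-!
Perturb the stationary path towards the time-independent vector `p`: the flux `(1 - u) 𝒬` and
the density `(1 - u) π + u p` still satisfy the continuity equation (a constant density carries
no flux) and, since `p` has zero `γ`-average, reach the value `(1 - u) y₀`. The elementary bound
`Φ(q, p) ≤ (q - p)² / (2k)` for `k ≤ min q p`, applied with `k = c(u) π w` where
`c(u) = 1 - |u| (1 + 1/m)` and `m` is a positive lower bound of `π`, makes the cost of this path
at most `u² C(p) / (4 c(u))`. Since `y - y₀ = -u y₀` and `c(u) → 1`, the limsup follows.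
-/

theorem Real.mul_log_div_sub_add_le {q p k : ℝ} (hk : 0 < k) (hkq : k ≤ q) (hkp : k ≤ p) :
    q * Real.log (q / p) - q + p ≤ (q - p) ^ 2 / (2 * k) := by
  have hq : 0 < q := hk.trans_le hkq
  have hp : 0 < p := hk.trans_le hkp
  have hneg : Real.log (q / p) = -Real.log (p / q) := by rw [← Real.log_inv, inv_div]
  rcases le_total q p with hqp | hpq
  · have h := Real.le_log_one_add_of_nonneg (div_nonneg (sub_nonneg.2 hqp) hq.le)
    rw [show 1 + (p - q) / q = p / q by field_simp; ring,
      show 2 * ((p - q) / q) / ((p - q) / q + 2) = 2 * (p - q) / (p + q) by field_simp; ring] at h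
    have hlog : Real.log (q / p) ≤ -(2 * (p - q) / (p + q)) := by
      rw [hneg]; linarith
    calc q * Real.log (q / p) - q + p ≤ q * -(2 * (p - q) / (p + q)) - q + p := by gcongr
      _ = (q - p) ^ 2 / (p + q) := by field_simp; ring
      _ ≤ (q - p) ^ 2 / (2 * k) := by gcongr; linarith
  · have h := Real.sinh_le_self_iff.2 (Real.log_nonpos (by positivity) ((div_le_one hq).2 hpq))
    rw [Real.sinh_log (by positivity), inv_div] at h
    have hlog : Real.log (q / p) ≤ (q / p - p / q) / 2 := by
      rw [hneg]; linarith
    calc q * Real.log (q / p) - q + p ≤ q * ((q / p - p / q) / 2) - q + p := by gcongr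
      _ = (q - p) ^ 2 / (2 * p) := by field_simp; ring
      _ ≤ (q - p) ^ 2 / (2 * k) := by gcongr

theorem Phi_le_sq_div {q p k : ℝ} (hk : 0 < k) (hkq : k ≤ q) (hkp : k ≤ p) :
    Phi q p ≤ ENNReal.ofReal ((q - p) ^ 2 / (2 * k)) := by
  rw [Phi, if_neg (hk.trans_le hkq).ne', if_neg (hk.trans_le hkp).ne']
  exact ENNReal.ofReal_le_ofReal (Real.mul_log_div_sub_add_le hk hkq hkp)

theorem exists_pos_forall_le_of_periodic {ι : Type*} [Finite ι] {f : ι → ℝ → ℝ} {c : ℝ}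
    (hc : c ≠ 0) (hper : ∀ i, Function.Periodic (f i) c) (hcont : ∀ i, Continuous (f i))
    (hpos : ∀ i t, 0 < f i t) : ∃ m > 0, ∀ i t, m ≤ f i t := by
  have hmin : ∀ i, ∃ t₀, ∀ t, f i t₀ ≤ f i t := fun i => by
    obtain ⟨_, ⟨t₀, rfl⟩, hleast⟩ :=
      ((hper i).compact_of_continuous hc (hcont i)).exists_isLeast (Set.range_nonempty _)
    exact ⟨t₀, fun t => hleast ⟨t, rfl⟩⟩
  choose t₀ ht₀ using hmin
  have hsmall : ∀ᶠ m in 𝓝[>] 0, ∀ i, m < f i (t₀ i) :=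
    eventually_all.2 fun i => nhdsWithin_le_nhds (eventually_lt_nhds (hpos i (t₀ i)))
  obtain ⟨m, hm, hm_pos⟩ := (hsmall.and self_mem_nhdsWithin).exists
  exact ⟨m, hm_pos, fun i t => (hm i).le.trans (ht₀ i t)⟩

theorem limsup_div_sq_le_of_eventually_le {f : ℝ → ℝ≥0∞} {g : ℝ → ℝ} {y₀ L : ℝ} (hy₀ : y₀ ≠ 0)
    (hg : Tendsto g (𝓝 0) (𝓝 L))
    (hf : ∀ᶠ u in 𝓝 0, f ((1 - u) * y₀) ≤ ENNReal.ofReal (u ^ 2 * g u)) :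
    limsup (fun y => f y / ENNReal.ofReal ((y - y₀) ^ 2)) (𝓝[≠] y₀)
      ≤ ENNReal.ofReal (L / y₀ ^ 2) := by
  set v : ℝ → ℝ := fun y => (y₀ - y) / y₀
  have hv : Tendsto v (𝓝[≠] y₀) (𝓝 0) := by
    have : ContinuousAt v y₀ := by fun_prop
    simpa [v] using this.tendsto.mono_left nhdsWithin_le_nhds
  have hbound : ∀ᶠ y in 𝓝[≠] y₀,
      f y / ENNReal.ofReal ((y - y₀) ^ 2) ≤ ENNReal.ofReal (g (v y) / y₀ ^ 2) := by
    filter_upwards [hv.eventually hf, self_mem_nhdsWithin] with y hfy hne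
    have hvy : v y ≠ 0 := div_ne_zero (sub_ne_zero.2 (Ne.symm hne)) hy₀
    have hy : (1 - v y) * y₀ = y := by simp only [v]; field_simp; ring
    have hsq : (y - y₀) ^ 2 = v y ^ 2 * y₀ ^ 2 := by simp only [v]; field_simp; ring
    rw [hy] at hfy
    calc f y / ENNReal.ofReal ((y - y₀) ^ 2)
        ≤ ENNReal.ofReal (v y ^ 2 * g (v y)) / ENNReal.ofReal (v y ^ 2 * y₀ ^ 2) := by
          rw [hsq]; gcongr
      _ = ENNReal.ofReal (g (v y) / y₀ ^ 2) := by
          rw [← ENNReal.ofReal_div_of_pos (by positivity), mul_div_mul_left _ _ (pow_ne_zero 2 hvy)]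
  have hlim : Tendsto (fun y => ENNReal.ofReal (g (v y) / y₀ ^ 2)) (𝓝[≠] y₀)
      (𝓝 (ENNReal.ofReal (L / y₀ ^ 2))) :=
    ENNReal.tendsto_ofReal ((hg.comp hv).div_const _)
  exact (limsup_le_limsup hbound).trans_eq hlim.limsup_eq

section Mixture

variable {V : Type*}

def mixFlux (pi : V → ℝ → ℝ) (w : V → V → ℝ → ℝ) (u : ℝ) (i j : V) (t : ℝ) : ℝ :=
  (1 - u) * (pi i t * w i j t)

def mixDensity (pi : V → ℝ → ℝ) (p : V → ℝ) (u : ℝ) (i : V) (t : ℝ) : ℝ :=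
  (1 - u) * pi i t + u * p i

variable {E : Finset (V × V)} {τ u : ℝ} {w α : V → V → ℝ → ℝ} {pi : V → ℝ → ℝ} {γ : V → ℝ → ℝ}
  {p : V → ℝ}

theorem Phi_mixFlux_le {c : ℝ} {i j : V} {t : ℝ} (hw : 0 < w i j t) (hpi : 0 < pi i t)
    (hc : 0 < c) (hcu : c ≤ 1 - u) (hcρ : c * pi i t ≤ mixDensity pi p u i t) :
    Phi (mixFlux pi w u i j t) (mixDensity pi p u i t * w i j t)
      ≤ ENNReal.ofReal (u ^ 2 * p i ^ 2 / (2 * c) * (w i j t / pi i t)) := by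
  refine (Phi_le_sq_div (k := c * pi i t * w i j t) (by positivity) ?_ ?_).trans_eq ?_
  · unfold mixFlux; rw [← mul_assoc]; gcongr
  · gcongr
  · unfold mixFlux mixDensity; congr 1; field_simp; ring

theorem lintegral_Phi_mixFlux_le {c : ℝ} {i j : V} (hτ : 0 < τ) (hw_cont : Continuous (w i j))
    (hw_pos : ∀ t, 0 < w i j t) (hpi_cont : Continuous (pi i)) (hpi_pos : ∀ t, 0 < pi i t)
    (hc : 0 < c) (hcu : c ≤ 1 - u) (hcρ : ∀ t, c * pi i t ≤ mixDensity pi p u i t) :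
    ENNReal.ofReal (1 / τ) *
        (∫⁻ t in Set.Ioc (0:ℝ) τ, Phi (mixFlux pi w u i j t) (mixDensity pi p u i t * w i j t))
      ≤ ENNReal.ofReal (u ^ 2 / (2 * c) *
          (p i ^ 2 * ((1 / τ) * (∫ t in (0:ℝ)..τ, w i j t / pi i t)))) := by
  have hratio : Continuous fun t => w i j t / pi i t :=
    hw_cont.div hpi_cont fun t => (hpi_pos t).ne'
  have hbound : ∫⁻ t in Set.Ioc (0:ℝ) τ,
        ENNReal.ofReal (u ^ 2 * p i ^ 2 / (2 * c) * (w i j t / pi i t))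
      = ENNReal.ofReal (u ^ 2 * p i ^ 2 / (2 * c) * ∫ t in (0:ℝ)..τ, w i j t / pi i t) := by
    rw [intervalIntegral.integral_of_le hτ.le, ← integral_const_mul,
      ofReal_integral_eq_lintegral_ofReal ((hratio.const_mul _).integrableOn_Ioc)
        (ae_of_all _ fun t => by have := hw_pos t; have := hpi_pos t; positivity)]
  calc ENNReal.ofReal (1 / τ) *
        (∫⁻ t in Set.Ioc (0:ℝ) τ, Phi (mixFlux pi w u i j t) (mixDensity pi p u i t * w i j t))
      ≤ ENNReal.ofReal (1 / τ) * ∫⁻ t in Set.Ioc (0:ℝ) τ,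
          ENNReal.ofReal (u ^ 2 * p i ^ 2 / (2 * c) * (w i j t / pi i t)) := by
        gcongr with t
        exact Phi_mixFlux_le (hw_pos t) (hpi_pos t) hc hcu (hcρ t)
    _ = _ := by
        rw [hbound, ← ENNReal.ofReal_mul (by positivity)]
        congr 1
        ring

theorem sum_lintegral_Phi_mixFlux_le {c : ℝ} (hτ : 0 < τ) (hw_cont : ∀ i j, Continuous (w i j))
    (hw_pos : ∀ i j, (i, j) ∈ E → ∀ t, 0 < w i j t) (hpi_cont : ∀ i, Continuous (pi i))
    (hpi_pos : ∀ i t, 0 < pi i t) (hc : 0 < c) (hcu : c ≤ 1 - u)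
    (hcρ : ∀ i t, c * pi i t ≤ mixDensity pi p u i t) :
    ∑ e ∈ E, ENNReal.ofReal (1 / τ) * (∫⁻ t in Set.Ioc (0:ℝ) τ,
        Phi (mixFlux pi w u e.1 e.2 t) (mixDensity pi p u e.1 t * w e.1 e.2 t))
      ≤ ENNReal.ofReal (u ^ 2 / (2 * c) *
          ∑ e ∈ E, p e.1 ^ 2 * ((1 / τ) * (∫ t in (0:ℝ)..τ, w e.1 e.2 t / pi e.1 t))) := by
  rw [Finset.mul_sum, ENNReal.ofReal_sum_of_nonneg fun e he => ?_]
  · exact Finset.sum_le_sum fun e he => lintegral_Phi_mixFlux_le hτ (hw_cont _ _)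
      (hw_pos _ _ he) (hpi_cont _) (hpi_pos _) hc hcu (hcρ _)
  · have : 0 ≤ ∫ t in (0:ℝ)..τ, w e.1 e.2 t / pi e.1 t := intervalIntegral.integral_nonneg hτ.le
      fun t _ => div_nonneg (hw_pos _ _ he t).le (hpi_pos e.1 t).le
    positivity

variable [Fintype V]

/-- The constraint set `F_{α,γ,y}`. -/
def IsAdmissible (E : Finset (V × V)) (τ : ℝ) (α : V → V → ℝ → ℝ) (γ : V → ℝ → ℝ) (y : ℝ)
    (Q : V → V → ℝ → ℝ) (ρ : V → ℝ → ℝ) : Prop :=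
  (∀ i j, Continuous (Q i j)) ∧
  (∀ i j, Function.Periodic (Q i j) τ) ∧
  (∀ i j t, 0 ≤ Q i j t) ∧
  (∀ i j, (i, j) ∉ E → ∀ t, Q i j t = 0) ∧
  (∀ i, ContDiff ℝ 1 (ρ i)) ∧
  (∀ i, Function.Periodic (ρ i) τ) ∧
  (∀ i t, 0 ≤ ρ i t) ∧
  (∀ t : ℝ, ∑ i, ρ i t = 1) ∧
  (∀ i t, deriv (ρ i) t + (∑ j, Q i j t) - (∑ j, Q j i t) = 0) ∧
  ((1 / τ) * (∫ t in (0:ℝ)..τ, ((∑ i, ∑ j, α i j t * Q i j t) + ∑ i, γ i t * ρ i t)) = y)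

theorem mul_le_mixDensity {m : ℝ} {i : V} {t : ℝ} (hm : 0 < m) (hm_le : m ≤ pi i t)
    (hp_nonneg : ∀ j, 0 ≤ p j) (hp_sum : ∑ j, p j = 1) :
    (1 - |u| * (1 + m⁻¹)) * pi i t ≤ mixDensity pi p u i t := by
  have hp_le : p i ≤ 1 :=
    hp_sum ▸ Finset.single_le_sum (fun j _ => hp_nonneg j) (Finset.mem_univ i)
  have h₁ : 1 ≤ pi i t * m⁻¹ := by rw [← div_eq_mul_inv, one_le_div hm]; exact hm_le
  unfold mixDensity
  nlinarith [mul_le_mul_of_nonneg_left h₁ (abs_nonneg u),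
    mul_le_mul_of_nonneg_right (neg_abs_le u) (hp_nonneg i),
    mul_le_mul_of_nonneg_left hp_le (abs_nonneg u),
    mul_nonneg (sub_nonneg.2 (le_abs_self u)) (hm.le.trans hm_le)]

theorem deriv_mixDensity_add_sum_sub_sum (hpi : ∀ i, Differentiable ℝ (pi i))
    (hpi_eq : ∀ i t, deriv (pi i) t + (∑ j, pi i t * w i j t) - (∑ j, pi j t * w j i t) = 0)
    (i : V) (t : ℝ) :
    deriv (mixDensity pi p u i) t + (∑ j, mixFlux pi w u i j t) - (∑ j, mixFlux pi w u j i t)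
      = 0 := by
  have hderiv : deriv (mixDensity pi p u i) t = (1 - u) * deriv (pi i) t :=
    (((hpi i t).hasDerivAt.const_mul (1 - u)).add_const (u * p i)).deriv
  simp only [hderiv, mixFlux, ← Finset.mul_sum _ _ (1 - u)]
  linear_combination (1 - u) * hpi_eq i t

theorem integral_observable_mix (hα : ∀ i j, Continuous (α i j)) (hγ : ∀ i, Continuous (γ i))
    (hpi : ∀ i, Continuous (pi i)) (hw : ∀ i j, Continuous (w i j)) :
    (1 / τ) * (∫ t in (0:ℝ)..τ,
        ((∑ i, ∑ j, α i j t * mixFlux pi w u i j t) + ∑ i, γ i t * mixDensity pi p u i t))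
      = (1 - u) * ((1 / τ) * (∫ t in (0:ℝ)..τ,
          ((∑ i, ∑ j, α i j t * (pi i t * w i j t)) + ∑ i, γ i t * pi i t)))
        + u * ∑ i, p i * ((1 / τ) * (∫ t in (0:ℝ)..τ, γ i t)) := by
  have hflux : ∀ t, ∑ i, ∑ j, α i j t * mixFlux pi w u i j t
      = (1 - u) * ∑ i, ∑ j, α i j t * (pi i t * w i j t) := fun t => by
    simp only [Finset.mul_sum, mixFlux]
    exact Finset.sum_congr rfl fun i _ => Finset.sum_congr rfl fun j _ => by ring
  have hdensity : ∀ t, ∑ i, γ i t * mixDensity pi p u i t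
      = (1 - u) * ∑ i, γ i t * pi i t + u * ∑ i, p i * γ i t := fun t => by
    simp only [Finset.mul_sum, ← Finset.sum_add_distrib, mixDensity]
    exact Finset.sum_congr rfl fun i _ => by ring
  have hrescale : ∑ i, p i * ((1 / τ) * (∫ t in (0:ℝ)..τ, γ i t))
      = (1 / τ) * ∑ i, p i * (∫ t in (0:ℝ)..τ, γ i t) := by
    rw [Finset.mul_sum]
    exact Finset.sum_congr rfl fun i _ => by ring
  simp only [hflux, hdensity, ← add_assoc, ← mul_add]
  rw [intervalIntegral.integral_add ((Continuous.intervalIntegrable (by fun_prop) _ _))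
      ((Continuous.intervalIntegrable (by fun_prop) _ _)),
    intervalIntegral.integral_const_mul, intervalIntegral.integral_const_mul,
    intervalIntegral.integral_finsetSum
      (fun i _ => (Continuous.intervalIntegrable (by fun_prop) _ _))]
  simp only [intervalIntegral.integral_const_mul, hrescale]
  ring

theorem isAdmissible_mix (hw_cont : ∀ i j, Continuous (w i j))
    (hw_per : ∀ i j, Function.Periodic (w i j) τ) (hw_pos : ∀ i j, (i, j) ∈ E → ∀ t, 0 < w i j t)
    (hw_zero : ∀ i j, (i, j) ∉ E → ∀ t, w i j t = 0) (hpi_diff : ∀ i, ContDiff ℝ 1 (pi i))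
    (hpi_per : ∀ i, Function.Periodic (pi i) τ) (hpi_nonneg : ∀ i t, 0 ≤ pi i t)
    (hpi_sum : ∀ t, ∑ i, pi i t = 1)
    (hpi_eq : ∀ i t, deriv (pi i) t + (∑ j, pi i t * w i j t) - (∑ j, pi j t * w j i t) = 0)
    (hα : ∀ i j, Continuous (α i j)) (hγ : ∀ i, Continuous (γ i)) (hp_sum : ∑ i, p i = 1)
    (hp_γ : ∑ i, p i * ((1 / τ) * (∫ t in (0:ℝ)..τ, γ i t)) = 0) (hu : u ≤ 1)
    (hρ : ∀ i t, 0 ≤ mixDensity pi p u i t) :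
    IsAdmissible E τ α γ ((1 - u) * ((1 / τ) * (∫ t in (0:ℝ)..τ,
        ((∑ i, ∑ j, α i j t * (pi i t * w i j t)) + ∑ i, γ i t * pi i t))))
      (mixFlux pi w u) (mixDensity pi p u) := by
  refine ⟨fun i j => ?_, fun i j t => ?_, fun i j t => ?_, fun i j hij t => ?_, fun i => ?_,
    fun i t => ?_, hρ, fun t => ?_,
    deriv_mixDensity_add_sum_sub_sum (fun i => (hpi_diff i).differentiable one_ne_zero) hpi_eq, ?_⟩
  · exact continuous_const.mul ((hpi_diff i).continuous.mul (hw_cont i j))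
  · simp only [mixFlux, hpi_per i t, hw_per i j t]
  · have hw : 0 ≤ w i j t := by
      by_cases hij : (i, j) ∈ E
      exacts [(hw_pos i j hij t).le, (hw_zero i j hij t).ge]
    exact mul_nonneg (sub_nonneg.2 hu) (mul_nonneg (hpi_nonneg i t) hw)
  · simp only [mixFlux, hw_zero i j hij t, mul_zero]
  · exact (contDiff_const.mul (hpi_diff i)).add contDiff_const
  · simp only [mixDensity, hpi_per i t]
  · simp only [mixDensity, Finset.sum_add_distrib, ← Finset.mul_sum, hpi_sum, hp_sum]
    ring
  · rw [integral_observable_mix hα hγ (fun i => (hpi_diff i).continuous) hw_cont, hp_γ,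
      mul_zero, add_zero]

end Mixture

theorem stmt2_general
    {V : Type} [Fintype V]
    (E : Finset (V × V))
    (τ : ℝ) (hτ : 0 < τ)
    (w : V → V → ℝ → ℝ)
    (hw_cont : ∀ i j, Continuous (w i j))
    (hw_per : ∀ i j, Function.Periodic (w i j) τ)
    (hw_pos : ∀ i j, (i, j) ∈ E → ∀ t, 0 < w i j t)
    (hw_zero : ∀ i j, (i, j) ∉ E → ∀ t, w i j t = 0)
    (pi : V → ℝ → ℝ)
    (hpi_diff : ∀ i, ContDiff ℝ 1 (pi i))
    (hpi_per : ∀ i, Function.Periodic (pi i) τ)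
    (hpi_pos : ∀ i t, 0 < pi i t)
    (hpi_sum : ∀ t : ℝ, ∑ i, pi i t = 1)
    (hpi_cont_eq : ∀ i t, deriv (pi i) t
      + (∑ j, pi i t * w i j t) - (∑ j, pi j t * w j i t) = 0)
    (α : V → V → ℝ → ℝ)
    (hα_cont : ∀ i j, Continuous (α i j))
    (γ : V → ℝ → ℝ)
    (hγ_cont : ∀ i, Continuous (γ i))
    (y0 : ℝ)
    (hy0 : y0 = (1 / τ) * (∫ t in (0:ℝ)..τ,
      ((∑ i, ∑ j, α i j t * (pi i t * w i j t)) + ∑ i, γ i t * pi i t)))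
    (hy0_ne : y0 ≠ 0)
    (Iag : ℝ → ℝ≥0∞)
    (hI : ∀ y : ℝ, Iag y = sInf { c : ℝ≥0∞ |
      ∃ (Q : V → V → ℝ → ℝ) (ρ : V → ℝ → ℝ),
        (∀ i j, Continuous (Q i j)) ∧
        (∀ i j, Function.Periodic (Q i j) τ) ∧
        (∀ i j t, 0 ≤ Q i j t) ∧
        (∀ i j, (i, j) ∉ E → ∀ t, Q i j t = 0) ∧
        (∀ i, ContDiff ℝ 1 (ρ i)) ∧
        (∀ i, Function.Periodic (ρ i) τ) ∧
        (∀ i t, 0 ≤ ρ i t) ∧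
        (∀ t : ℝ, ∑ i, ρ i t = 1) ∧
        (∀ i t, deriv (ρ i) t + (∑ j, Q i j t) - (∑ j, Q j i t) = 0) ∧
        ((1 / τ) * (∫ t in (0:ℝ)..τ,
          ((∑ i, ∑ j, α i j t * Q i j t) + ∑ i, γ i t * ρ i t)) = y) ∧
        c = ∑ e ∈ E, ENNReal.ofReal (1 / τ) *
          (∫⁻ t in Set.Ioc (0:ℝ) τ, Phi (Q e.1 e.2 t) (ρ e.1 t * w e.1 e.2 t)) })
    -- the probability vector p
    (p : V → ℝ) (hp_nonneg : ∀ i, 0 ≤ p i) (hp_sum : ∑ i, p i = 1)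
    (hp_γ : ∑ i, p i * ((1 / τ) * (∫ t in (0:ℝ)..τ, γ i t)) = 0)
    (Cp : ℝ)
    (hCp : Cp = 2 * ∑ e ∈ E, (p e.1) ^ 2 * ((1 / τ) * (∫ t in (0:ℝ)..τ,
      w e.1 e.2 t / pi e.1 t))) :
    Filter.limsup (fun y : ℝ => Iag y / ENNReal.ofReal ((y - y0) ^ 2)) (𝓝[≠] y0)
      ≤ ENNReal.ofReal (Cp / (4 * y0 ^ 2)) := by
  obtain ⟨m, hm, hm_le⟩ := exists_pos_forall_le_of_periodic hτ.ne' hpi_per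
    (fun i => (hpi_diff i).continuous) hpi_pos
  set c : ℝ → ℝ := fun u => 1 - |u| * (1 + m⁻¹)
  have hc_pos : ∀ᶠ u in 𝓝 0, 0 < c u :=
    continuousAt_const.eventually_lt (by fun_prop) (by simp [c])
  have hbound : ∀ᶠ u in 𝓝 0, Iag ((1 - u) * y0) ≤ ENNReal.ofReal (u ^ 2 * (Cp / (4 * c u))) := by
    filter_upwards [hc_pos] with u hcu_pos
    have hcu : c u ≤ 1 - u := by
      have : 0 ≤ |u| * m⁻¹ := by positivity
      simp only [c]; nlinarith [le_abs_self u]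
    have hcρ : ∀ i t, c u * pi i t ≤ mixDensity pi p u i t := fun i t =>
      mul_le_mixDensity hm (hm_le i t) hp_nonneg hp_sum
    obtain ⟨h₁, h₂, h₃, h₄, h₅, h₆, h₇, h₈, h₉, h₁₀⟩ := isAdmissible_mix hw_cont hw_per
      hw_pos hw_zero hpi_diff hpi_per (fun i t => (hpi_pos i t).le) hpi_sum hpi_cont_eq
      hα_cont hγ_cont hp_sum hp_γ (by linarith)
      fun i t => (mul_nonneg hcu_pos.le (hpi_pos i t).le).trans (hcρ i t)
    rw [hI, hy0]
    refine le_trans (sInf_le ⟨_, _, h₁, h₂, h₃, h₄, h₅, h₆, h₇, h₈, h₉, h₁₀, rfl⟩)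
      ((sum_lintegral_Phi_mixFlux_le hτ hw_cont hw_pos (fun i => (hpi_diff i).continuous) hpi_pos
        hcu_pos hcu hcρ).trans_eq ?_)
    rw [hCp]
    congr 1
    field_simp
    ring
  have hlim : Tendsto (fun u => Cp / (4 * c u)) (𝓝 0) (𝓝 (Cp / 4)) := by
    have : ContinuousAt (fun u => Cp / (4 * c u)) 0 := by
      fun_prop (disch := simp [c])
    simpa [c] using this.tendsto
  exact (limsup_div_sq_le_of_eventually_le hy0_ne hlim hbound).trans_eq (by rw [div_div])

theorem stmt2
    {V : Type} [Fintype V] [Nonempty V]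
    (E : Finset (V × V)) (hE : ∀ i : V, (i, i) ∉ E)
    (τ : ℝ) (hτ : 0 < τ)
    (w : V → V → ℝ → ℝ)
    (hw_cont : ∀ i j, Continuous (w i j))
    (hw_per : ∀ i j, Function.Periodic (w i j) τ)
    (hw_pos : ∀ i j, (i, j) ∈ E → ∀ t, 0 < w i j t)
    (hw_zero : ∀ i j, (i, j) ∉ E → ∀ t, w i j t = 0)
    (pi : V → ℝ → ℝ)
    (hpi_diff : ∀ i, ContDiff ℝ 1 (pi i))
    (hpi_per : ∀ i, Function.Periodic (pi i) τ)
    (hpi_pos : ∀ i t, 0 < pi i t)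
    (hpi_sum : ∀ t : ℝ, ∑ i, pi i t = 1)
    (hpi_cont_eq : ∀ i t, deriv (pi i) t
      + (∑ j, pi i t * w i j t) - (∑ j, pi j t * w j i t) = 0)
    (α : V → V → ℝ → ℝ)
    (hα_cont : ∀ i j, Continuous (α i j))
    (hα_per : ∀ i j, Function.Periodic (α i j) τ)
    (γ : V → ℝ → ℝ)
    (hγ_cont : ∀ i, Continuous (γ i))
    (hγ_per : ∀ i, Function.Periodic (γ i) τ)
    (y0 : ℝ)
    (hy0 : y0 = (1 / τ) * (∫ t in (0:ℝ)..τ,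
      ((∑ i, ∑ j, α i j t * (pi i t * w i j t)) + ∑ i, γ i t * pi i t)))
    (hy0_ne : y0 ≠ 0)
    (Iag : ℝ → ℝ≥0∞)
    (hI : ∀ y : ℝ, Iag y = sInf { c : ℝ≥0∞ |
      ∃ (Q : V → V → ℝ → ℝ) (ρ : V → ℝ → ℝ),
        (∀ i j, Continuous (Q i j)) ∧
        (∀ i j, Function.Periodic (Q i j) τ) ∧
        (∀ i j t, 0 ≤ Q i j t) ∧
        (∀ i j, (i, j) ∉ E → ∀ t, Q i j t = 0) ∧
        (∀ i, ContDiff ℝ 1 (ρ i)) ∧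
        (∀ i, Function.Periodic (ρ i) τ) ∧
        (∀ i t, 0 ≤ ρ i t) ∧
        (∀ t : ℝ, ∑ i, ρ i t = 1) ∧
        (∀ i t, deriv (ρ i) t + (∑ j, Q i j t) - (∑ j, Q j i t) = 0) ∧
        ((1 / τ) * (∫ t in (0:ℝ)..τ,
          ((∑ i, ∑ j, α i j t * Q i j t) + ∑ i, γ i t * ρ i t)) = y) ∧
        c = ∑ e ∈ E, ENNReal.ofReal (1 / τ) *
          (∫⁻ t in Set.Ioc (0:ℝ) τ, Phi (Q e.1 e.2 t) (ρ e.1 t * w e.1 e.2 t)) })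
    -- the probability vector p
    (p : V → ℝ) (hp_nonneg : ∀ i, 0 ≤ p i) (hp_sum : ∑ i, p i = 1)
    (hp_γ : ∑ i, p i * ((1 / τ) * (∫ t in (0:ℝ)..τ, γ i t)) = 0)
    (Cp : ℝ)
    (hCp : Cp = 2 * ∑ e ∈ E, (p e.1) ^ 2 * ((1 / τ) * (∫ t in (0:ℝ)..τ,
      w e.1 e.2 t / pi e.1 t))) :
    Filter.limsup (fun y : ℝ => Iag y / ENNReal.ofReal ((y - y0) ^ 2)) (𝓝[≠] y0)
      ≤ ENNReal.ofReal (Cp / (4 * y0 ^ 2)) :=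
  stmt2_general E τ hτ w hw_cont hw_per hw_pos hw_zero pi hpi_diff hpi_per hpi_pos hpi_sum
    hpi_cont_eq α hα_cont γ hγ_cont y0 hy0 hy0_ne Iag hI p hp_nonneg hp_sum hp_γ Cp hCp
end
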